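/- arXiv:2407.15676 — 2 statements merged into one kernel-verified Lean document; each statement's English description precedes it below -/
import Mathlib

section
/- Define a small-step relation on pairs (Q, g) where Q is a stack (a list of frames, each frame either a statement with cost c ≥ 1 consuming one unit of gas when executed, or a zero-cost marker) and g : ℕ is the gas; each step either pops a cost-1 frame and decrements g (requiring g ≥ 1), or expands a composite frame into finitely many frames whose total cost is strictly smaller without changing g, or pops a zero-cost marker without changing g. If the total cost of Q is strictly less than g, then every maximal execution sequence from (Q, g) is finite and never reaches a state where a cost-consuming frame is on top with g = 0. -/
/-!
Every step strictly decreases the total cost of the stack, or keeps it and shortens the stack,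
so execution terminates. Gas only drops together with a unit of cost, hence `Q.sum < g` is an
invariant; a cost-consuming frame on top contributes at least `1` to `Q.sum`, so then `g ≠ 0`.
-/

/-- Abstract gas semantics on stacks of frames, where a frame is represented
by its cost (`0` for zero-cost markers). A step either pops a cost-1 frame
consuming one unit of gas, expands a composite frame into finitely many frames
of strictly smaller total cost without consuming gas, or pops a zero-cost
marker without consuming gas. -/
inductive GasStep : List ℕ × ℕ → List ℕ × ℕ → Prop
  | pop (Q : List ℕ) (g : ℕ) (hg : 1 ≤ g) :
      GasStep (1 :: Q, g) (Q, g - 1)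
  | expand (c : ℕ) (Q' Q : List ℕ) (g : ℕ) (hc : 1 ≤ c) (h : Q'.sum < c) :
      GasStep (c :: Q, g) (Q' ++ Q, g)
  | marker (Q : List ℕ) (g : ℕ) :
      GasStep (0 :: Q, g) (Q, g)

namespace GasStep

lemma toLex_sum_length_lt {s t : List ℕ × ℕ} (h : GasStep s t) :
    toLex (t.1.sum, t.1.length) < toLex (s.1.sum, s.1.length) := by
  cases h with
  | pop => exact Prod.Lex.left _ _ (by simp)
  | expand c Q' Q g _ hsum =>
    exact Prod.Lex.left _ _ (by simp only [List.sum_append, List.sum_cons]; omega)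
  | marker =>
    rw [List.sum_cons, zero_add]
    exact Prod.Lex.right _ (by simp)

lemma wellFounded_flip : WellFounded (flip GasStep) :=
  Subrelation.wf (fun h => toLex_sum_length_lt h)
    (InvImage.wf (fun s : List ℕ × ℕ => toLex (s.1.sum, s.1.length)) wellFounded_lt)

lemma not_exists_infinite_chain :
    ¬ ∃ f : ℕ → List ℕ × ℕ, ∀ i, GasStep (f i) (f (i + 1)) := fun ⟨f, hf⟩ =>
  (wellFounded_iff_isEmpty_descending_chain.1 wellFounded_flip).elim ⟨f, hf⟩

lemma sum_lt_gas {s t : List ℕ × ℕ} (h : GasStep s t) (hs : s.1.sum < s.2) :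
    t.1.sum < t.2 := by
  cases h with
  | pop => simp only [List.sum_cons] at hs ⊢; omega
  | expand c Q' Q g _ hsum => simp only [List.sum_cons] at hs; simp only [List.sum_append]; omega
  | marker => simpa using hs

lemma sum_lt_gas_of_reflTransGen {s t : List ℕ × ℕ} (h : Relation.ReflTransGen GasStep s t)
    (hs : s.1.sum < s.2) : t.1.sum < t.2 := by
  induction h with
  | refl => exact hs
  | tail _ hstep ih => exact hstep.sum_lt_gas ih

end GasStep

/-- If the total cost of the stack is strictly below the gas, then every
execution sequence from `(Q, g)` is finite, and no reachable state has a
cost-consuming frame on top with zero gas. -/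
theorem stmt_6 (Q : List ℕ) (g : ℕ) (h : Q.sum < g) :
    (¬ ∃ f : ℕ → List ℕ × ℕ, f 0 = (Q, g) ∧ ∀ i, GasStep (f i) (f (i + 1))) ∧
    (∀ Q' g', Relation.ReflTransGen GasStep (Q, g) (Q', g') →
      ∀ c rest, Q' = c :: rest → 1 ≤ c → g' ≠ 0) := by
  refine ⟨fun ⟨f, _, hf⟩ => GasStep.not_exists_infinite_chain ⟨f, hf⟩, ?_⟩
  rintro Q' g' hreach c rest rfl hc rfl
  have := GasStep.sum_lt_gas_of_reflTransGen hreach h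
  simp only [List.sum_cons] at this
  omega
end

section
/- Let expressions be generated by values v : ℤ ⊎ Bool ⊎ Addr, variables (looked up in a finite partial map ρ_V from names to values), field accesses (looked up via a partial map of states), and operations applied to subexpressions. Define a typing judgment assigning value types (BOOL, bounded INT^u_ℓ, or an interface name with a well-formedness condition on the state), and a big-step evaluation relation. Safety: if the state and variable environment are well-typed with respect to (Γ, Δ), e has type B, and e evaluates to v, then v has type B (in particular, if B = INT^u_ℓ then ℓ ≤ v ≤ u). -/
abbrev Name := String
abbrev Addr := String

/-- Values: integers, booleans, and addresses. -/
inductive Val : Type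
  | int (n : ℤ)
  | bool (b : Bool)
  | addr (X : Addr)

/-- Value types: BOOL, bounded integers INT^u_ℓ, and interface names. -/
inductive VTy : Type
  | bool
  | intB (ℓ u : ℤ)
  | iface (I : Name)

/-- Typing of values, relative to an assignment `Γa` of interface names to
addresses (the well-formedness condition on the state). -/
inductive HasType (Γa : Addr → Option Name) : Val → VTy → Prop
  | bool (b : Bool) : HasType Γa (.bool b) .bool
  | int {n ℓ u : ℤ} : ℓ ≤ n → n ≤ u → HasType Γa (.int n) (.intB ℓ u)
  | addr {X : Addr} {I : Name} : Γa X = some I → HasType Γa (.addr X) (.iface I)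

/-- Expressions: values, variables, field accesses and operations. -/
inductive Exp (Op : Type) : Type
  | val (v : Val)
  | var (x : Name)
  | fld (e : Exp Op) (p : Name)
  | op (o : Op) (es : List (Exp Op))

/-- Big-step evaluation of expressions, relative to a variable environment
`ρ`, a state `σ` and an evaluation function for operations. -/
inductive EvalE {Op : Type} (opEval : Op → List Val → Option Val)
    (σ : Addr → Option (Name → Option Val)) (ρ : Name → Option Val) :
    Exp Op → Val → Prop
  | val (v : Val) : EvalE opEval σ ρ (.val v) v
  | var {x : Name} {v : Val} : ρ x = some v → EvalE opEval σ ρ (.var x) v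
  | fld {e : Exp Op} {X : Addr} {P : Name → Option Val} {p : Name} {v : Val} :
      EvalE opEval σ ρ e (.addr X) → σ X = some P → P p = some v →
      EvalE opEval σ ρ (.fld e p) v
  | op {o : Op} {es : List (Exp Op)} {vs : List Val} {v : Val} :
      List.Forall₂ (EvalE opEval σ ρ) es vs → opEval o vs = some v →
      EvalE opEval σ ρ (.op o es) v

/-- Typing of expressions, relative to `Γa` (interfaces of addresses), `Γf`
(field types of interfaces), `Δ` (types of variables) and a typing relation
`opTy` for operations. -/
inductive TyE {Op : Type} (Γa : Addr → Option Name)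
    (Γf : Name → Name → Option VTy) (Δ : Name → Option VTy)
    (opTy : Op → List VTy → VTy → Prop) : Exp Op → VTy → Prop
  | val {v : Val} {B : VTy} : HasType Γa v B → TyE Γa Γf Δ opTy (.val v) B
  | var {x : Name} {B : VTy} : Δ x = some B → TyE Γa Γf Δ opTy (.var x) B
  | fld {e : Exp Op} {I p : Name} {B : VTy} :
      TyE Γa Γf Δ opTy e (.iface I) → Γf I p = some B →
      TyE Γa Γf Δ opTy (.fld e p) B
  | op {o : Op} {es : List (Exp Op)} {Bs : List VTy} {B : VTy} :
      List.Forall₂ (TyE Γa Γf Δ opTy) es Bs → opTy o Bs B →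
      TyE Γa Γf Δ opTy (.op o es) B

/-- Mutual recursor for expressions and lists of expressions. -/
theorem expRec {Op : Type} {motive : Exp Op → Prop} {motive2 : List (Exp Op) → Prop}
    (val : ∀ v, motive (.val v)) (var : ∀ x, motive (.var x))
    (fld : ∀ e p, motive e → motive (.fld e p))
    (op : ∀ o es, motive2 es → motive (.op o es))
    (nil : motive2 [])
    (cons : ∀ e es, motive e → motive2 es → motive2 (e :: es)) :
    ∀ e, motive e :=
  fun e => Exp.rec (motive_1 := motive) (motive_2 := motive2)
    val var fld op nil cons e

/-- Lemma 4 (Safety for expressions): in well-typed environments, evaluation of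
a well-typed expression produces a value of the ascribed type; in particular
bounded integer types yield integers within their bounds. -/
theorem stmt_8 {Op : Type} (Γa : Addr → Option Name)
    (Γf : Name → Name → Option VTy) (Δ : Name → Option VTy)
    (opTy : Op → List VTy → VTy → Prop)
    (opEval : Op → List Val → Option Val)
    (σ : Addr → Option (Name → Option Val)) (ρ : Name → Option Val)
    (hop : ∀ o vs Bs B v, List.Forall₂ (HasType Γa) vs Bs → opTy o Bs B →
      opEval o vs = some v → HasType Γa v B)
    (hσ : ∀ X I, Γa X = some I → ∃ P, σ X = some P ∧
      ∀ p B, Γf I p = some B → ∃ v, P p = some v ∧ HasType Γa v B)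
    (hρ : ∀ x B, Δ x = some B → ∃ v, ρ x = some v ∧ HasType Γa v B)
    (e : Exp Op) (B : VTy) (v : Val)
    (hty : TyE Γa Γf Δ opTy e B) (hev : EvalE opEval σ ρ e v) :
    HasType Γa v B ∧ (∀ ℓ u : ℤ, B = .intB ℓ u → ∃ n : ℤ, v = .int n ∧ ℓ ≤ n ∧ n ≤ u) := by
  have key : ∀ e B v, TyE Γa Γf Δ opTy e B → EvalE opEval σ ρ e v →
      HasType Γa v B := by
    intro e
    induction e using expRec (motive2 := fun es => ∀ Bs vs,
        List.Forall₂ (TyE Γa Γf Δ opTy) es Bs →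
        List.Forall₂ (EvalE opEval σ ρ) es vs →
        List.Forall₂ (HasType Γa) vs Bs) with
    | val v => intro B w hty hev; cases hev; cases hty with | val h => exact h
    | var x =>
        intro B w hty hev; cases hev with | var hx =>
        cases hty with | var hB =>
        obtain ⟨v', hv', ht⟩ := hρ x B hB
        rw [hx] at hv'; cases hv'; exact ht
    | fld e p ih =>
        intro B w hty hev
        cases hev with | fld hev hσX hP =>
        cases hty with | fld hty hΓf =>
        have := ih _ _ hty hev
        cases this with | addr hI =>
        obtain ⟨P', hP', hall⟩ := hσ _ _ hI
        rw [hσX] at hP'; cases hP'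
        obtain ⟨v', hv', ht⟩ := hall _ _ hΓf
        rw [hP] at hv'; cases hv'; exact ht
    | op o es ih =>
        intro B w hty hev
        cases hev with | op hevs hopev =>
        cases hty with | op htys hopty =>
        exact hop _ _ _ _ _ (ih _ _ htys hevs) hopty hopev
    | nil =>
        rename_i Bs vs h1 h2; cases h1; cases h2; exact .nil
    | cons e es ihe ihes =>
        rename_i Bs vs h1 h2
        cases h1 with | cons hB hBs =>
        cases h2 with | cons hv hvs =>
        exact .cons (ihe _ _ hB hv) (ihes _ _ hBs hvs)
  refine ⟨key e B v hty hev, ?_⟩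
  rintro ℓ u rfl
  have := key e _ v hty hev
  cases this with | int h1 h2 => exact ⟨_, rfl, h1, h2⟩
end
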